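/- arXiv:1903.03828 — 5 statements merged into one kernel-verified Lean document; each statement's English description precedes it below -/
import Mathlib

section
/- Let M_r, N_r, M_l, N_l, U_r, V_r, U_l, V_l be a doubly-coprime factorization of G over a ring R, and let Q be any m×p matrix. Define X=(U_r−N_rQ)M_l, Y=(V_r−M_rQ)M_l, W=(U_r−N_rQ)N_l, Z=I+(V_r−M_rQ)N_l. Then X−GY=I, W−GZ=0, −XG+W=0, and −YG+Z=I. -/
theorem youla_to_io_parametrization {R : Type*} [Ring R] {p m : ℕ}
    (G : Matrix (Fin p) (Fin m) R)
    (Mr Ul : Matrix (Fin m) (Fin m) R) (Ml Ur : Matrix (Fin p) (Fin p) R)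
    (Nr Nl : Matrix (Fin p) (Fin m) R) (Vr Vl : Matrix (Fin m) (Fin p) R)
    [Invertible Mr] [Invertible Ml]
    (hG1 : G = Nr * ⅟Mr) (hG2 : G = ⅟Ml * Nl)
    (hdc : Matrix.fromBlocks Ul (-Vl) (-Nl) Ml * Matrix.fromBlocks Mr Vr Nr Ur = 1)
    (Q : Matrix (Fin m) (Fin p) R)
    (X : Matrix (Fin p) (Fin p) R) (Y : Matrix (Fin m) (Fin p) R)
    (W : Matrix (Fin p) (Fin m) R) (Z : Matrix (Fin m) (Fin m) R)
    (hX : X = (Ur - Nr * Q) * Ml) (hY : Y = (Vr - Mr * Q) * Ml)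
    (hW : W = (Ur - Nr * Q) * Nl) (hZ : Z = 1 + (Vr - Mr * Q) * Nl) :
    X - G * Y = 1 ∧ W - G * Z = 0 ∧ -(X * G) + W = 0 ∧ -(Y * G) + Z = 1 := by
  subst hG2 hX hY hW hZ
  rw [Matrix.fromBlocks_multiply, ← Matrix.fromBlocks_one] at hdc
  have hA := congrArg Matrix.toBlocks₂₁ hdc
  have hB := congrArg Matrix.toBlocks₂₂ hdc
  simp only [Matrix.toBlocks_fromBlocks₂₁, Matrix.toBlocks_fromBlocks₂₂] at hA hB
  -- hA : -Nl * Mr + Ml * Nr = 0, hB : -Nl * Vr + Ml * Ur = 1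
  have h2 : Nl * Mr = Ml * Nr := by
    rw [Matrix.neg_mul, neg_add_eq_zero] at hA; exact hA
  have h1 : Nl * Vr = Ml * Ur - 1 := by
    rw [Matrix.neg_mul] at hB; rw [← hB]; abel
  have e1 : Nl * (Mr * Q) = Ml * (Nr * Q) := by
    rw [← Matrix.mul_assoc, h2, Matrix.mul_assoc]
  have hK : Nl * (Vr - Mr * Q) = Ml * (Ur - Nr * Q) - 1 := by
    rw [Matrix.mul_sub, Matrix.mul_sub, h1, e1]; abel
  have inv : ⅟Ml * Ml = 1 := invOf_mul_self Ml
  have h : ⅟Ml * Nl * (Vr - Mr * Q) = (Ur - Nr * Q) - ⅟Ml := by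
    rw [Matrix.mul_assoc, hK, Matrix.mul_sub, ← Matrix.mul_assoc, inv,
      Matrix.one_mul, Matrix.mul_one]
  refine ⟨?_, ?_, ?_, ?_⟩
  · rw [← Matrix.mul_assoc, h]
    simp only [Matrix.sub_mul]
    rw [inv]; abel
  · rw [Matrix.mul_add, Matrix.mul_one, ← Matrix.mul_assoc, h]
    simp only [Matrix.sub_mul]
    abel
  · rw [Matrix.mul_assoc, ← Matrix.mul_assoc Ml, mul_invOf_self, Matrix.one_mul]; abel
  · rw [Matrix.mul_assoc, ← Matrix.mul_assoc Ml, mul_invOf_self, Matrix.one_mul]; abel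
end

section
/- Let G have a doubly-coprime factorization and let (X,Y,W,Z) satisfy the affine equations X−GY=I, W−GZ=0, −XG+W=0, −YG+Z=I. Define Q = V_l·X·U_r − U_l·Y·U_r − V_l·W·V_r + U_l·Z·V_r − V_l·U_r. Then Q = M_r⁻¹·V_r − M_r⁻¹·Y·M_l⁻¹, and hence Y = (V_r − M_rQ)·M_l. -/
theorem io_to_youla_Q_formula {R : Type*} [Ring R] {p m : ℕ}
    (G : Matrix (Fin p) (Fin m) R)
    (Mr Ul : Matrix (Fin m) (Fin m) R) (Ml Ur : Matrix (Fin p) (Fin p) R)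
    (Nr Nl : Matrix (Fin p) (Fin m) R) (Vr Vl : Matrix (Fin m) (Fin p) R)
    [Invertible Mr] [Invertible Ml]
    (hG1 : G = Nr * ⅟Mr) (hG2 : G = ⅟Ml * Nl)
    (hdc : Matrix.fromBlocks Ul (-Vl) (-Nl) Ml * Matrix.fromBlocks Mr Vr Nr Ur = 1)
    (X : Matrix (Fin p) (Fin p) R) (Y : Matrix (Fin m) (Fin p) R)
    (W : Matrix (Fin p) (Fin m) R) (Z : Matrix (Fin m) (Fin m) R)
    (h1 : X - G * Y = 1) (h2 : W - G * Z = 0)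
    (h3 : -(X * G) + W = 0) (h4 : -(Y * G) + Z = 1)
    (Q : Matrix (Fin m) (Fin p) R)
    (hQ : Q = Vl * X * Ur - Ul * Y * Ur - Vl * W * Vr + Ul * Z * Vr - Vl * Ur) :
    Q = ⅟Mr * Vr - ⅟Mr * Y * ⅟Ml ∧ Y = (Vr - Mr * Q) * Ml := by
  rw [Matrix.fromBlocks_multiply, ← Matrix.fromBlocks_one, Matrix.fromBlocks_inj] at hdc
  obtain ⟨e11, e12, e21, e22⟩ := hdc
  rw [Matrix.neg_mul] at e11 e12 e22
  have hVlNr : Vl * Nr = Ul * Mr - 1 := by rw [← e11]; abel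
  have hNlVr : Nl * Vr = Ml * Ur - 1 := by rw [← e22]; abel
  have hVlG : Vl * G = Ul - ⅟Mr := by
    rw [hG1, ← Matrix.mul_assoc, hVlNr, Matrix.sub_mul, Matrix.mul_assoc,
      mul_invOf_self, Matrix.mul_one, Matrix.one_mul]
  have hGVr : G * Vr = Ur - ⅟Ml := by
    rw [hG2, Matrix.mul_assoc, hNlVr, Matrix.mul_sub, ← Matrix.mul_assoc,
      invOf_mul_self, Matrix.one_mul, Matrix.mul_one]
  have key1 : ∀ {k : ℕ} (A : Matrix (Fin m) (Fin k) R),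
      Vl * (G * A) = Ul * A - ⅟Mr * A := by
    intro k A
    rw [← Matrix.mul_assoc, hVlG, Matrix.sub_mul]
  have hX : X = 1 + G * Y := by rw [← h1]; abel
  have hZ : Z = 1 + Y * G := by rw [← h4]; abel
  have hW : W = G + G * (Y * G) := by
    have hW' : W = G * Z := sub_eq_zero.mp h2
    rw [hW', hZ, Matrix.mul_add, Matrix.mul_one]
  have hQ' : Q = ⅟Mr * Vr - ⅟Mr * Y * ⅟Ml := by
    rw [hQ, hX, hW, hZ]
    simp only [Matrix.mul_add, Matrix.add_mul, Matrix.mul_one, Matrix.one_mul,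
      Matrix.mul_assoc, key1]
    simp only [hGVr, Matrix.mul_sub, Matrix.sub_mul, Matrix.mul_assoc]
    abel
  refine ⟨hQ', ?_⟩
  have h5 : Mr * Q = Vr - Y * ⅟Ml := by
    rw [hQ']
    simp only [Matrix.mul_sub, ← Matrix.mul_assoc, mul_invOf_self, Matrix.one_mul]
  have h6 : Vr - Mr * Q = Y * ⅟Ml := by rw [h5]; abel
  rw [h6, Matrix.mul_assoc, invOf_mul_self, Matrix.mul_one]
end

section
/- Let G have a doubly-coprime factorization and let (X,Y,W,Z) satisfy the affine equations of the input-output parametrization, with Q defined as Q = V_lXU_r − U_lYU_r − V_lWV_r + U_lZV_r − V_lU_r. Then X = (U_r − N_rQ)·M_l; consequently, if X is invertible then Y·X⁻¹ = (V_r − M_rQ)·(U_r − N_rQ)⁻¹. -/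
theorem io_to_youla_X_formula {R : Type*} [Ring R] {p m : ℕ}
    (G : Matrix (Fin p) (Fin m) R)
    (Mr Ul : Matrix (Fin m) (Fin m) R) (Ml Ur : Matrix (Fin p) (Fin p) R)
    (Nr Nl : Matrix (Fin p) (Fin m) R) (Vr Vl : Matrix (Fin m) (Fin p) R)
    [Invertible Mr] [Invertible Ml]
    (hG1 : G = Nr * ⅟Mr) (hG2 : G = ⅟Ml * Nl)
    (hdc : Matrix.fromBlocks Ul (-Vl) (-Nl) Ml * Matrix.fromBlocks Mr Vr Nr Ur = 1)
    (X : Matrix (Fin p) (Fin p) R) (Y : Matrix (Fin m) (Fin p) R)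
    (W : Matrix (Fin p) (Fin m) R) (Z : Matrix (Fin m) (Fin m) R)
    (h1 : X - G * Y = 1) (h2 : W - G * Z = 0)
    (h3 : -(X * G) + W = 0) (h4 : -(Y * G) + Z = 1)
    (Q : Matrix (Fin m) (Fin p) R)
    (hQ : Q = Vl * X * Ur - Ul * Y * Ur - Vl * W * Vr + Ul * Z * Vr - Vl * Ur) :
    X = (Ur - Nr * Q) * Ml ∧
    (IsUnit X →
      Y * Ring.inverse X = (Vr - Mr * Q) * Ring.inverse (Ur - Nr * Q)) := by
  have hAB := hdc
  have hNr : Nr = G * Mr := by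
    rw [hG1, Matrix.mul_assoc, invOf_mul_self, Matrix.mul_one]
  have hNl : Nl = Ml * G := by
    rw [hG2, ← Matrix.mul_assoc, mul_invOf_self, Matrix.one_mul]
  -- forward block identities
  rw [Matrix.fromBlocks_multiply, ← Matrix.fromBlocks_one, Matrix.fromBlocks_inj] at hdc
  obtain ⟨f11, f12, f21, f22⟩ := hdc
  have f12' : Ul * Vr - Vl * Ur = 0 := by
    rwa [Matrix.neg_mul, ← sub_eq_add_neg] at f12
  have hMl1 : Ml * (Ur - G * Vr) = 1 := by
    calc Ml * (Ur - G * Vr) = (-Nl) * Vr + Ml * Ur := by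
          rw [hNl, Matrix.mul_sub, Matrix.neg_mul, Matrix.mul_assoc]; abel
    _ = 1 := f22
  have hinv : Ur - G * Vr = ⅟Ml := by
    calc Ur - G * Vr = ⅟Ml * (Ml * (Ur - G * Vr)) := by
          rw [← Matrix.mul_assoc, invOf_mul_self, Matrix.one_mul]
    _ = ⅟Ml := by rw [hMl1, Matrix.mul_one]
  have hUr : Ur = G * Vr + ⅟Ml := by rw [← hinv, add_sub_cancel]
  -- LDU factorization of the right factor and its explicit right inverse
  set B := Matrix.fromBlocks Mr Vr Nr Ur with hBdef
  set A := Matrix.fromBlocks Ul (-Vl) (-Nl) Ml with hAdef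
  set L := Matrix.fromBlocks (1 : Matrix (Fin m) (Fin m) R) (0 : Matrix (Fin m) (Fin p) R) G 1 with hLdef
  set Dg := Matrix.fromBlocks Mr (0 : Matrix (Fin m) (Fin p) R) 0 (⅟Ml) with hDgdef
  set U := Matrix.fromBlocks (1 : Matrix (Fin m) (Fin m) R) (⅟Mr * Vr) (0 : Matrix (Fin p) (Fin m) R) 1 with hUdef
  set L' := Matrix.fromBlocks (1 : Matrix (Fin m) (Fin m) R) (0 : Matrix (Fin m) (Fin p) R) (-G) 1 with hL'def
  set Dg' := Matrix.fromBlocks (⅟Mr) (0 : Matrix (Fin m) (Fin p) R) 0 Ml with hDg'def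
  set U' := Matrix.fromBlocks (1 : Matrix (Fin m) (Fin m) R) (-(⅟Mr * Vr)) (0 : Matrix (Fin p) (Fin m) R) 1 with hU'def
  have hB : B = L * (Dg * U) := by
    rw [hBdef, hLdef, hDgdef, hUdef, Matrix.fromBlocks_multiply,
      Matrix.fromBlocks_multiply, Matrix.fromBlocks_inj]
    refine ⟨?_, ?_, ?_, ?_⟩ <;>
      simp only [Matrix.one_mul, Matrix.mul_one, Matrix.zero_mul, Matrix.mul_zero,
        add_zero, zero_add]
    · rw [← Matrix.mul_assoc, mul_invOf_self, Matrix.one_mul]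
    · exact hNr
    · rw [← Matrix.mul_assoc Mr, mul_invOf_self, Matrix.one_mul]; exact hUr
  have hU1 : U * U' = 1 := by
    rw [hUdef, hU'def, Matrix.fromBlocks_multiply, ← Matrix.fromBlocks_one,
      Matrix.fromBlocks_inj]
    refine ⟨?_, ?_, ?_, ?_⟩ <;>
      simp only [Matrix.one_mul, Matrix.mul_one, Matrix.zero_mul, Matrix.mul_zero,
        add_zero, zero_add, neg_add_cancel]
  have hDg1 : Dg * Dg' = 1 := by
    rw [hDgdef, hDg'def, Matrix.fromBlocks_multiply, ← Matrix.fromBlocks_one,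
      Matrix.fromBlocks_inj]
    refine ⟨?_, ?_, ?_, ?_⟩ <;>
      simp only [Matrix.one_mul, Matrix.mul_one, Matrix.zero_mul, Matrix.mul_zero,
        add_zero, zero_add, mul_invOf_self, invOf_mul_self]
  have hL1 : L * L' = 1 := by
    rw [hLdef, hL'def, Matrix.fromBlocks_multiply, ← Matrix.fromBlocks_one,
      Matrix.fromBlocks_inj]
    refine ⟨?_, ?_, ?_, ?_⟩ <;>
      simp only [Matrix.one_mul, Matrix.mul_one, Matrix.zero_mul, Matrix.mul_zero,
        add_zero, zero_add, add_neg_cancel]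
  set D := U' * (Dg' * L') with hDdef
  have hBD : B * D = 1 := by
    rw [hB, hDdef, mul_assoc L (Dg * U), mul_assoc Dg U, ← mul_assoc U U',
      hU1, one_mul, ← mul_assoc Dg Dg', hDg1, one_mul, hL1]
  have hA : A = D := by
    calc A = A * (B * D) := by rw [hBD, mul_one]
    _ = A * B * D := by rw [mul_assoc]
    _ = D := by rw [hAB, one_mul]
  have hBA : B * A = 1 := by rw [hA]; exact hBD
  rw [hBdef, hAdef, Matrix.fromBlocks_multiply, ← Matrix.fromBlocks_one,
    Matrix.fromBlocks_inj] at hBA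
  obtain ⟨r11, r12, r21, r22⟩ := hBA
  have hUrMl : Ur * Ml = 1 + Nr * Vl := by
    rw [Matrix.mul_neg, neg_add_eq_sub, sub_eq_iff_eq_add] at r22; exact r22
  have hVrMl : Vr * Ml = Mr * Vl := by
    rw [Matrix.mul_neg, neg_add_eq_sub, sub_eq_zero] at r12; exact r12
  have hNrUl : Nr * Ul = G + Nr * Vl * G := by
    rw [Matrix.mul_neg, add_neg_eq_zero] at r21
    calc Nr * Ul = Ur * Nl := r21
    _ = Ur * Ml * G := by rw [hNl, Matrix.mul_assoc]
    _ = G + Nr * Vl * G := by rw [hUrMl, Matrix.add_mul, Matrix.one_mul]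
  have hMrUl : Mr * Ul = 1 + Mr * Vl * G := by
    rw [Matrix.mul_neg, ← sub_eq_add_neg, sub_eq_iff_eq_add] at r11
    calc Mr * Ul = 1 + Vr * Nl := r11
    _ = 1 + Vr * Ml * G := by rw [hNl, Matrix.mul_assoc]
    _ = 1 + Mr * Vl * G := by rw [hVrMl]
  -- input-output equations
  have hX : X = 1 + G * Y := by rw [sub_eq_iff_eq_add] at h1; exact h1
  have hW : W = X * G := by rwa [neg_add_eq_sub, sub_eq_zero] at h3
  have hZ : Z = 1 + Y * G := by rwa [neg_add_eq_sub, sub_eq_iff_eq_add] at h4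
  have hQ2 : Q = (Vl * X - Ul * Y) * (Ur - G * Vr) + (Ul * Vr - Vl * Ur) := by
    rw [hQ, hW, hZ]
    simp only [Matrix.sub_mul, Matrix.mul_sub, Matrix.mul_add, Matrix.add_mul,
      Matrix.mul_one, Matrix.one_mul, Matrix.mul_assoc]
    abel
  have hQ3 : Q = (Vl * X - Ul * Y) * ⅟Ml := by rw [hQ2, hinv, f12', add_zero]
  have hQMl : Q * Ml = Vl * X - Ul * Y := by
    rw [hQ3, Matrix.mul_assoc, invOf_mul_self, Matrix.mul_one]
  have key : (Ur - Nr * Q) * Ml = X := by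
    have e1 : (Ur - Nr * Q) * Ml = Ur * Ml - Nr * (Q * Ml) := by
      rw [Matrix.sub_mul, Matrix.mul_assoc]
    have e3 : Nr * (Ul * Y) = G * Y + Nr * (Vl * (G * Y)) := by
      calc Nr * (Ul * Y) = Nr * Ul * Y := by rw [Matrix.mul_assoc]
      _ = (G + Nr * Vl * G) * Y := by rw [hNrUl]
      _ = G * Y + Nr * (Vl * (G * Y)) := by
          rw [Matrix.add_mul, Matrix.mul_assoc, Matrix.mul_assoc]
    rw [e1, hUrMl, hQMl, hX]
    simp only [Matrix.mul_add, Matrix.mul_one, Matrix.mul_sub, e3]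
    abel
  have hY : Y = (Vr - Mr * Q) * Ml := by
    have e1 : (Vr - Mr * Q) * Ml = Vr * Ml - Mr * (Q * Ml) := by
      rw [Matrix.sub_mul, Matrix.mul_assoc]
    have e4 : Mr * (Ul * Y) = Y + Mr * (Vl * (G * Y)) := by
      calc Mr * (Ul * Y) = Mr * Ul * Y := by rw [Matrix.mul_assoc]
      _ = (1 + Mr * Vl * G) * Y := by rw [hMrUl]
      _ = Y + Mr * (Vl * (G * Y)) := by
          rw [Matrix.add_mul, Matrix.one_mul, Matrix.mul_assoc,
            Matrix.mul_assoc]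
    rw [e1, hVrMl, hQMl, hX]
    simp only [Matrix.mul_add, Matrix.mul_one, Matrix.mul_sub, e4]
    abel
  refine ⟨key.symm, fun hu => ?_⟩
  haveI := hu.invertible
  have hT : Ur - Nr * Q = X * ⅟Ml := by
    calc Ur - Nr * Q = (Ur - Nr * Q) * Ml * ⅟Ml := by
          rw [Matrix.mul_assoc, mul_invOf_self, Matrix.mul_one]
    _ = X * ⅟Ml := by rw [key]
  rw [hT]
  haveI : Invertible (X * ⅟Ml) := invertibleMul X (⅟Ml)
  rw [Ring.inverse_invertible (X * ⅟Ml), Ring.inverse_invertible X,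
    invOf_mul, invOf_invOf, ← Matrix.mul_assoc, ← hY]
end

section
/- Let G be a p×m matrix over a ring R and let 𝒦 be an additive subgroup (submodule) of m×p matrices that is closed under the closed-loop map, i.e., for every K ∈ 𝒦 with I−GK invertible, −K(I−GK)⁻¹ ∈ 𝒦 and K(I−GK)⁻¹ ∈ 𝒦 when defined, assuming h_G(𝒦)=𝒦. Then: (i) if K ∈ 𝒦 and I−GK is invertible, the parameter Y := K(I−GK)⁻¹ lies in 𝒦; (ii) conversely, if Y ∈ 𝒦 and I+GY is invertible, then K := Y(I+GY)⁻¹ lies in 𝒦 and satisfies I−GK invertible with K(I−GK)⁻¹ = Y. -/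
/-!
Part (i) is quadratic invariance together with closure of `𝒦` under negation. For part (ii),
`h_G(-Y) = Y (I + GY)⁻¹ = K`, so `K ∈ 𝒦`; moreover `I - GK = (I + GY)⁻¹`, which is invertible
and whose inverse `I + GY` gives back `K (I + GY) = Y`.
-/

theorem one_sub_mul_inverse_one_add {S : Type*} [Ring S] {a : S} (h : IsUnit (1 + a)) :
    1 - a * Ring.inverse (1 + a) = Ring.inverse (1 + a) := by
  have h_cancel : Ring.inverse (1 + a) + a * Ring.inverse (1 + a) = 1 := by
    simpa only [add_mul, one_mul] using Ring.mul_inverse_cancel _ h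
  exact (eq_sub_of_add_eq h_cancel).symm

namespace Matrix

variable {R : Type*} [Ring R] {n k : Type*} [Fintype n] [Fintype k] [DecidableEq k]

theorem one_sub_mul_mul_inverse_one_add {G : Matrix k n R} {Y : Matrix n k R}
    (h : IsUnit (1 + G * Y)) :
    1 - G * (Y * Ring.inverse (1 + G * Y)) = Ring.inverse (1 + G * Y) := by
  rw [← Matrix.mul_assoc]
  exact one_sub_mul_inverse_one_add h

theorem mul_inverse_one_add_mul_inverse_one_sub {G : Matrix k n R} {Y : Matrix n k R}
    (h : IsUnit (1 + G * Y)) :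
    Y * Ring.inverse (1 + G * Y) * Ring.inverse (1 - G * (Y * Ring.inverse (1 + G * Y))) = Y := by
  rw [one_sub_mul_mul_inverse_one_add h, Ring.inverse_inverse h, Matrix.mul_assoc,
    Ring.inverse_mul_cancel _ h, Matrix.mul_one]

end Matrix

theorem qi_subspace_parameter_equivalence {R : Type*} [Ring R] {p m : ℕ}
    (G : Matrix (Fin p) (Fin m) R)
    (𝒦 : AddSubgroup (Matrix (Fin m) (Fin p) R))
    (hQI : ∀ K ∈ 𝒦, IsUnit (1 - G * K) → -(K * Ring.inverse (1 - G * K)) ∈ 𝒦) :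
    (∀ K ∈ 𝒦, IsUnit (1 - G * K) → K * Ring.inverse (1 - G * K) ∈ 𝒦) ∧
    (∀ Y ∈ 𝒦, IsUnit (1 + G * Y) →
      Y * Ring.inverse (1 + G * Y) ∈ 𝒦 ∧
      IsUnit (1 - G * (Y * Ring.inverse (1 + G * Y))) ∧
      (Y * Ring.inverse (1 + G * Y)) *
        Ring.inverse (1 - G * (Y * Ring.inverse (1 + G * Y))) = Y) := by
  refine ⟨fun K hK hu => neg_mem_iff.mp (hQI K hK hu), fun Y hY hu => ⟨?_, ?_,
    Matrix.mul_inverse_one_add_mul_inverse_one_sub hu⟩⟩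
  · have h_neg : -(-Y * Ring.inverse (1 - G * -Y)) ∈ 𝒦 :=
      hQI (-Y) (neg_mem hY) (by rwa [Matrix.mul_neg, sub_neg_eq_add])
    rwa [Matrix.mul_neg, sub_neg_eq_add, Matrix.neg_mul, neg_neg] at h_neg
  · rw [Matrix.one_sub_mul_mul_inverse_one_add hu]
    exact isUnit_ringInverse.mpr hu
end

section
/- Let G be a p×m matrix and Y an m×p matrix over a ring R with I+GY invertible, and set K = Y(I+GY)⁻¹. Then I−GK is invertible with (I−GK)⁻¹ = I+GY, and K(I−GK)⁻¹ = Y. -/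
theorem inverse_direction_of_Y_map {R : Type*} [Ring R] {p m : ℕ}
    (G : Matrix (Fin p) (Fin m) R) (Y : Matrix (Fin m) (Fin p) R)
    [Invertible (1 + G * Y)]
    (K : Matrix (Fin m) (Fin p) R) (hK : K = Y * ⅟(1 + G * Y)) :
    IsUnit (1 - G * K) ∧ Ring.inverse (1 - G * K) = 1 + G * Y ∧
      K * (1 + G * Y) = Y := by
  have h : 1 - G * K = ⅟(1 + G * Y) := by
    subst hK
    have h1 : G * (Y * ⅟(1 + G * Y)) = (1 + G * Y) * ⅟(1 + G * Y) - ⅟(1 + G * Y) := by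
      rw [add_mul, one_mul, add_sub_cancel_left, Matrix.mul_assoc]
    rw [h1, mul_invOf_self, sub_sub_cancel]
  refine ⟨?_, ?_, ?_⟩
  · rw [h]; exact isUnit_of_invertible _
  · rw [h, Ring.inverse_invertible, invOf_invOf]
  · rw [hK, Matrix.mul_assoc, invOf_mul_self, Matrix.mul_one]
end
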